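/- arXiv:1004.0888 — 2 statements merged into one kernel-verified Lean document; each statement's English description precedes it below -/
import Mathlib

section
/- Let d ≥ 2 and let W₁, …, W_{d²−1} ∈ Matrix (Fin d) (Fin d) ℂ be unitary matrices with Tr(Wⱼ) = 0 for all j and Tr(Wⱼᴴ W_k) = 0 for all j ≠ k. Then for every unit vector ψ ∈ ℂ^d: ∑_{j=1}^{d²−1} |⟨ψ, Wⱼ ψ⟩|² = d − 1. -/
open Matrix Kronecker BigOperators ComplexOrder

noncomputable def traceNorm {n : Type*} [Fintype n] [DecidableEq n] (A : Matrix n n ℂ) : ℝ :=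
  (((Matrix.posSemidef_conjTranspose_mul_self A).1.eigenvectorUnitary.1 *
    diagonal (((↑) : ℝ → ℂ) ∘ (√·) ∘ (Matrix.posSemidef_conjTranspose_mul_self A).1.eigenvalues) *
    (star (Matrix.posSemidef_conjTranspose_mul_self A).1.eigenvectorUnitary : Matrix n n ℂ)).trace).re

def IsDensity {n : Type*} [Fintype n] (ρ : Matrix n n ℂ) : Prop :=
  ρ.PosSemidef ∧ ρ.trace = 1

def tensorId {X Y Z : Type*} (Φ : Matrix X X ℂ → Matrix Y Y ℂ)
    (ρ : Matrix (X × Z) (X × Z) ℂ) : Matrix (Y × Z) (Y × Z) ℂ :=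
  Matrix.of fun p q => Φ (Matrix.of fun x x' => ρ (x, p.2) (x', q.2)) p.1 q.1

noncomputable def ChoiMatrix {X Y : Type*} [Fintype X] [DecidableEq X] [Fintype Y]
    (Φ : Matrix X X ℂ → Matrix Y Y ℂ) : Matrix (Y × X) (Y × X) ℂ :=
  ∑ j : X, ∑ k : X, (Φ (Matrix.single j k 1)) ⊗ₖ (Matrix.single j k 1)

def IsChannel {X Y : Type*} [Fintype X] [DecidableEq X] [Fintype Y]
    (Φ : Matrix X X ℂ →ₗ[ℂ] Matrix Y Y ℂ) : Prop :=
  (∀ M, (Φ M).trace = M.trace) ∧ (ChoiMatrix (⇑Φ)).PosSemidef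

def SeparableOp {Y Z : Type*} [Fintype Y] [Fintype Z]
    (P : Matrix (Y × Z) (Y × Z) ℂ) : Prop :=
  ∃ (N : ℕ) (Q : Fin N → Matrix Y Y ℂ) (R : Fin N → Matrix Z Z ℂ),
    (∀ i, (Q i).PosSemidef) ∧ (∀ i, (R i).PosSemidef) ∧ P = ∑ i, Q i ⊗ₖ R i

def partialTranspose {Y Z : Type*} (M : Matrix (Y × Z) (Y × Z) ℂ) :
    Matrix (Y × Z) (Y × Z) ℂ :=
  Matrix.of fun p q => M (p.1, q.2) (q.1, p.2)

def IsPPT {Y Z : Type*} [Fintype Y] [Fintype Z] (M : Matrix (Y × Z) (Y × Z) ℂ) : Prop :=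
  M.PosSemidef ∧ (partialTranspose M).PosSemidef

/-!
Adjoining the identity to the `Wⱼ` gives `d²` pairwise orthogonal unitaries, each of
Hilbert–Schmidt norm `√d`, hence (after vectorisation) an orthogonal basis of the space of
`d × d` matrices. Parseval's identity applied to the projection `P = ψψᴴ`, which has
Hilbert–Schmidt norm `1` and coefficients `Tr(P B) = ⟨ψ, B ψ⟩`, gives
`1 + ∑ⱼ |⟨ψ, Wⱼ ψ⟩|² = d`, the `1` coming from the identity.
-/

open scoped InnerProductSpace

theorem sum_sq_norm_inner_left_of_pairwise_orthogonal {𝕜 E ι : Type*} [RCLike 𝕜]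
    [NormedAddCommGroup E] [InnerProductSpace 𝕜 E] [FiniteDimensional 𝕜 E] [Fintype ι]
    {v : ι → E} {r : ℝ} (hr : 0 < r) (hnorm : ∀ i, ‖v i‖ = r)
    (horth : Pairwise fun i j => ⟪v i, v j⟫_𝕜 = 0) (hcard : Fintype.card ι = Module.finrank 𝕜 E)
    (x : E) :
    ∑ i, ‖⟪x, v i⟫_𝕜‖ ^ 2 = r ^ 2 * ‖x‖ ^ 2 := by
  set w : ι → E := fun i => ((r⁻¹ : ℝ) : 𝕜) • v i
  have hw : Orthonormal 𝕜 w := by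
    refine ⟨fun i => ?_, fun i j hij => ?_⟩
    · simp [w, norm_smul, hnorm, hr.ne', abs_of_pos hr]
    · simp [w, inner_smul_left, inner_smul_right, horth hij]
  let b := OrthonormalBasis.mk hw (hw.linearIndependent.span_eq_top_of_card_eq_finrank' hcard).ge
  have parseval := b.sum_sq_norm_inner_left x
  simp only [b, OrthonormalBasis.coe_mk, w, inner_smul_right, norm_mul, mul_pow,
    RCLike.norm_ofReal, abs_inv, abs_of_pos hr, ← Finset.mul_sum] at parseval
  rw [← parseval, ← mul_assoc, ← mul_pow, mul_inv_cancel₀ hr.ne', one_pow, one_mul]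

namespace Matrix

variable {𝕜 : Type*} [RCLike 𝕜] {n : Type*} [Fintype n]

theorem inner_toLp_vec (A B : Matrix n n 𝕜) :
    ⟪WithLp.toLp 2 A.vec, WithLp.toLp 2 B.vec⟫_𝕜 = (Aᴴ * B).trace := by
  rw [EuclideanSpace.inner_toLp_toLp, dotProduct_comm, star_vec_dotProduct_vec]

theorem trace_vecMulVec_star_mul (ψ : n → 𝕜) (A : Matrix n n 𝕜) :
    (vecMulVec ψ (star ψ) * A).trace = star ψ ⬝ᵥ A *ᵥ ψ := by
  rw [vecMulVec_mul, trace_vecMulVec, dotProduct_comm, dotProduct_mulVec]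

theorem nonempty_of_star_dotProduct_self_eq_one {ψ : n → 𝕜} (hψ : star ψ ⬝ᵥ ψ = 1) :
    Nonempty n := by
  by_contra h
  rw [not_nonempty_iff] at h
  simp [dotProduct] at hψ

theorem sum_sq_norm_expectation_of_orthogonal_unitaries [DecidableEq n] {ι : Type*} [Fintype ι]
    {U : ι → Matrix n n 𝕜} (hU : ∀ i, (U i)ᴴ * U i = 1)
    (horth : Pairwise fun i j => ((U i)ᴴ * U j).trace = 0)
    (hcard : Fintype.card ι = Fintype.card n ^ 2) {ψ : n → 𝕜} (hψ : star ψ ⬝ᵥ ψ = 1) :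
    ∑ i, ‖star ψ ⬝ᵥ U i *ᵥ ψ‖ ^ 2 = Fintype.card n := by
  have := nonempty_of_star_dotProduct_self_eq_one hψ
  set P := vecMulVec ψ (star ψ)
  have hP : Pᴴ = P := by rw [conjTranspose_vecMulVec, star_star]
  have hnorm (i : ι) : ‖WithLp.toLp 2 (U i).vec‖ = √(Fintype.card n) := by
    rw [@norm_eq_sqrt_re_inner 𝕜, inner_toLp_vec, hU, trace_one]
    simp
  have hxnorm : ‖WithLp.toLp 2 P.vec‖ = 1 := by
    rw [@norm_eq_sqrt_re_inner 𝕜, inner_toLp_vec, hP, trace_vecMulVec_star_mul, vecMulVec_mulVec,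
      hψ]
    simp [hψ]
  have hcard' : Fintype.card ι = Module.finrank 𝕜 (EuclideanSpace 𝕜 (n × n)) := by
    rw [finrank_euclideanSpace, Fintype.card_prod, hcard, sq]
  have := sum_sq_norm_inner_left_of_pairwise_orthogonal (Real.sqrt_pos.2 (by positivity)) hnorm
    (fun i j hij => (inner_toLp_vec _ _).trans (horth hij)) hcard' (WithLp.toLp 2 P.vec)
  simp only [inner_toLp_vec, hP, hxnorm, P, trace_vecMulVec_star_mul] at this
  simpa using this

end Matrix

theorem sum_sq_abs_expectation_eq_general
    (d : ℕ) (W : Fin (d ^ 2 - 1) → Matrix (Fin d) (Fin d) ℂ)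
    (hWunit : ∀ j, (W j)ᴴ * W j = 1)
    (hWtr : ∀ j, (W j).trace = 0)
    (hWorth : ∀ j k, j ≠ k → ((W j)ᴴ * W k).trace = 0)
    (ψ : Fin d → ℂ) (hψ : star ψ ⬝ᵥ ψ = 1) :
    ∑ j, ‖star ψ ⬝ᵥ (W j).mulVec ψ‖ ^ 2 = (d : ℝ) - 1 := by
  have hd_pos : 0 < d := by
    simpa using Fintype.card_pos_iff.2 (nonempty_of_star_dotProduct_self_eq_one hψ)
  let U : Option (Fin (d ^ 2 - 1)) → Matrix (Fin d) (Fin d) ℂ := fun o => o.elim 1 W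
  have hU (o) : (U o)ᴴ * U o = 1 := by cases o <;> simp [U, hWunit]
  have horth : Pairwise fun o o' => ((U o)ᴴ * U o').trace = 0 := by
    rintro (_ | j) (_ | k) hne
    · exact absurd rfl hne
    · simpa [U] using hWtr k
    · simp [U, trace_conjTranspose, hWtr j]
    · exact hWorth j k (Option.some_injective _ |>.ne_iff.1 hne)
  have hcard : Fintype.card (Option (Fin (d ^ 2 - 1))) = Fintype.card (Fin d) ^ 2 := by
    simp only [Fintype.card_option, Fintype.card_fin]
    have : 1 ≤ d ^ 2 := Nat.one_le_pow _ _ hd_pos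
    omega
  have := sum_sq_norm_expectation_of_orthogonal_unitaries hU horth hcard hψ
  simp only [Fintype.sum_option, U, Option.elim_none, Option.elim_some, one_mulVec, hψ, norm_one,
    one_pow, Fintype.card_fin] at this
  linarith

/-- for an orthonormal family of `d² - 1` traceless unitaries `Wⱼ` and a unit
vector `ψ`, `∑ⱼ |⟨ψ, Wⱼ ψ⟩|² = d - 1`. -/
theorem sum_sq_abs_expectation_eq
    (d : ℕ) (hd : 2 ≤ d) (W : Fin (d ^ 2 - 1) → Matrix (Fin d) (Fin d) ℂ)
    (hWunit : ∀ j, (W j)ᴴ * W j = 1)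
    (hWtr : ∀ j, (W j).trace = 0)
    (hWorth : ∀ j k, j ≠ k → ((W j)ᴴ * W k).trace = 0)
    (ψ : Fin d → ℂ) (hψ : star ψ ⬝ᵥ ψ = 1) :
    ∑ j, ‖star ψ ⬝ᵥ (W j).mulVec ψ‖ ^ 2 = (d : ℝ) - 1 :=
  sum_sq_abs_expectation_eq_general d W hWunit hWtr hWorth ψ hψ
end

section
/- Let X, Y, Z be finite index types and let Ξ : Matrix X X ℂ →ₗ[ℂ] Matrix Y Y ℂ be a positive (not necessarily completely positive) trace-preserving linear map. Then for every density operator ρ on X × Z and every pair of separable positive semidefinite operators P₀, P₁ on Y × Z with P₀ + P₁ = 1: ⟨P₀ − P₁, (Ξ ⊗ id_Z)(ρ)⟩ ≤ 1. (That is, the separable-measurement distinguishability norm of (Ξ ⊗ id)(ρ) equals 1, as it would for a genuine state, even though (Ξ ⊗ id)(ρ) need not be positive semidefinite.) -/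
open Matrix Kronecker BigOperators ComplexOrder

/-!
Since `P₀ = 1 - P₁`, the functional equals `Tr σ - 2 Tr (P₁ σ)` with `σ = (Ξ ⊗ id) ρ`, and
`Tr σ = Tr ρ = 1` because `Ξ` preserves traces. So it suffices that `Tr (P₁ σ) ≥ 0`, and by
separability only for `P₁ = Q ⊗ R`. For product operators the identity factor can be traced out
first: `Tr ((Q ⊗ R) σ) = Tr (Q Ξ(M))` with `M = Tr_Z ((1 ⊗ R) ρ) = Tr_Z ((1 ⊗ √R) ρ (1 ⊗ √R))`
positive semidefinite, so `Ξ` is only ever applied to a positive operator on `X` alone.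
-/

open scoped MatrixOrder in
lemma Matrix.PosSemidef.trace_mul_nonneg {n : Type*} [Fintype n] {A B : Matrix n n ℂ}
    (hA : A.PosSemidef) (hB : B.PosSemidef) : 0 ≤ (A * B).trace := by
  classical
  obtain ⟨C, rfl⟩ := CStarAlgebra.nonneg_iff_eq_star_mul_self.mp hB.nonneg
  rw [Matrix.star_eq_conjTranspose, ← Matrix.mul_assoc, Matrix.trace_mul_comm, ← Matrix.mul_assoc]
  exact (hA.mul_mul_conjTranspose_same C).trace_nonneg

section

variable {X Y Z : Type*} [Fintype X] [Fintype Y] [Fintype Z]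

def partialTraceRight (N : Matrix (X × Z) (X × Z) ℂ) : Matrix X X ℂ :=
  Matrix.of fun x x' => ∑ z, N (x, z) (x', z)

lemma partialTraceRight_one_kronecker_mul_comm [DecidableEq X] (A : Matrix Z Z ℂ)
    (N : Matrix (X × Z) (X × Z) ℂ) :
    partialTraceRight ((1 ⊗ₖ A) * N) = partialTraceRight (N * (1 ⊗ₖ A)) := by
  ext x x'
  simp only [partialTraceRight, Matrix.mul_apply, kroneckerMap_apply, Matrix.one_apply, ite_mul,
    one_mul, zero_mul, mul_ite, mul_zero, Fintype.sum_prod_type, Finset.sum_ite_irrel,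
    Finset.sum_const_zero, Finset.sum_ite_eq, Finset.sum_ite_eq', Finset.mem_univ, if_true,
    of_apply]
  rw [Finset.sum_comm]
  simp [mul_comm]

lemma partialTraceRight_one_kronecker_mul [DecidableEq X] (R : Matrix Z Z ℂ)
    (N : Matrix (X × Z) (X × Z) ℂ) :
    partialTraceRight ((1 ⊗ₖ R) * N) =
      ∑ z, ∑ z', R z z' • Matrix.of fun x x' => N (x, z') (x', z) := by
  ext x x'
  simp [partialTraceRight, Matrix.mul_apply, Fintype.sum_prod_type, Matrix.one_apply,
    Matrix.sum_apply]

lemma posSemidef_partialTraceRight {N : Matrix (X × Z) (X × Z) ℂ}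
    (hN : N.PosSemidef) : (partialTraceRight N).PosSemidef := by
  classical
  let K : Z → Matrix X (X × Z) ℂ := fun z => Matrix.of fun x p => if p = (x, z) then 1 else 0
  have h : partialTraceRight N = ∑ z, K z * N * (K z)ᴴ := by
    ext x x'
    simp [K, partialTraceRight, Matrix.mul_apply, Matrix.sum_apply]
  rw [h]
  exact Matrix.posSemidef_sum _ fun z _ => hN.mul_mul_conjTranspose_same _

open scoped MatrixOrder in
lemma posSemidef_partialTraceRight_one_kronecker_mul [DecidableEq X]
    {R : Matrix Z Z ℂ} (hR : R.PosSemidef) {ρ : Matrix (X × Z) (X × Z) ℂ}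
    (hρ : ρ.PosSemidef) : (partialTraceRight ((1 ⊗ₖ R) * ρ)).PosSemidef := by
  classical
  obtain ⟨S, rfl⟩ := CStarAlgebra.nonneg_iff_eq_star_mul_self.mp hR.nonneg
  have hS : (1 : Matrix X X ℂ) ⊗ₖ (star S * S) = (1 ⊗ₖ Sᴴ) * (1 ⊗ₖ S) := by
    rw [← Matrix.mul_kronecker_mul, Matrix.one_mul, Matrix.star_eq_conjTranspose]
  have hS' : (1 : Matrix X X ℂ) ⊗ₖ Sᴴ = (1 ⊗ₖ S)ᴴ := by
    rw [Matrix.conjTranspose_kronecker, Matrix.conjTranspose_one]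
  rw [hS, Matrix.mul_assoc, partialTraceRight_one_kronecker_mul_comm, hS']
  exact posSemidef_partialTraceRight (hρ.mul_mul_conjTranspose_same _)

lemma trace_kronecker_mul_tensorId [DecidableEq X] (Ξ : Matrix X X ℂ →ₗ[ℂ] Matrix Y Y ℂ)
    (Q : Matrix Y Y ℂ) (R : Matrix Z Z ℂ) (ρ : Matrix (X × Z) (X × Z) ℂ) :
    ((Q ⊗ₖ R) * tensorId Ξ ρ).trace = (Q * Ξ (partialTraceRight ((1 ⊗ₖ R) * ρ))).trace := by
  simp only [partialTraceRight_one_kronecker_mul, map_sum, map_smul, Matrix.mul_sum,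
    Matrix.mul_smul, Matrix.trace_sum, Matrix.trace_smul]
  simp only [Matrix.trace, tensorId, diag_apply, Matrix.mul_apply, kroneckerMap_apply, of_apply,
    Fintype.sum_prod_type, smul_eq_mul, Finset.mul_sum]
  rw [Finset.sum_comm]
  refine Finset.sum_congr rfl fun z _ => ?_
  conv_rhs => rw [Finset.sum_comm]
  refine Finset.sum_congr rfl fun y _ => ?_
  rw [Finset.sum_comm]
  exact Finset.sum_congr rfl fun z' _ => Finset.sum_congr rfl fun y' _ => by ring

lemma trace_tensorId {Ξ : Matrix X X ℂ →ₗ[ℂ] Matrix Y Y ℂ}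
    (hΞ : ∀ M : Matrix X X ℂ, (Ξ M).trace = M.trace) (ρ : Matrix (X × Z) (X × Z) ℂ) :
    (tensorId Ξ ρ).trace = ρ.trace := by
  calc (tensorId Ξ ρ).trace = ∑ z, (Ξ (Matrix.of fun x x' => ρ (x, z) (x', z))).trace := by
        simp only [Matrix.trace, tensorId, Matrix.diag, Matrix.of_apply, Fintype.sum_prod_type]
        exact Finset.sum_comm
    _ = ∑ z, (Matrix.of fun x x' => ρ (x, z) (x', z)).trace := by simp only [hΞ]
    _ = ρ.trace := by
        simp only [Matrix.trace, Matrix.diag, Matrix.of_apply, Fintype.sum_prod_type]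
        exact Finset.sum_comm

lemma trace_mul_tensorId_nonneg_of_separableOp {Ξ : Matrix X X ℂ →ₗ[ℂ] Matrix Y Y ℂ}
    (hΞ : ∀ M : Matrix X X ℂ, M.PosSemidef → (Ξ M).PosSemidef)
    {ρ : Matrix (X × Z) (X × Z) ℂ} (hρ : ρ.PosSemidef) {P : Matrix (Y × Z) (Y × Z) ℂ}
    (hP : SeparableOp P) : 0 ≤ (P * tensorId Ξ ρ).trace := by
  classical
  obtain ⟨N, Q, R, hQ, hR, rfl⟩ := hP
  rw [Matrix.sum_mul, Matrix.trace_sum]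
  refine Finset.sum_nonneg fun i _ => ?_
  rw [trace_kronecker_mul_tensorId]
  exact (hQ i).trace_mul_nonneg
    (hΞ _ (posSemidef_partialTraceRight_one_kronecker_mul (hR i) hρ))

end

theorem sep_norm_of_positive_map_le_one_general
    {X Y Z : Type*} [Fintype X] [Fintype Y] [Fintype Z] [DecidableEq Y] [DecidableEq Z]
    (Ξ : Matrix X X ℂ →ₗ[ℂ] Matrix Y Y ℂ)
    (hΞpos : ∀ M : Matrix X X ℂ, M.PosSemidef → (Ξ M).PosSemidef)
    (hΞtr : ∀ M : Matrix X X ℂ, (Ξ M).trace = M.trace)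
    (ρ : Matrix (X × Z) (X × Z) ℂ) (hρ : IsDensity ρ)
    (P₀ P₁ : Matrix (Y × Z) (Y × Z) ℂ)
    (hP₁sep : SeparableOp P₁)
    (hP₁ : P₁.PosSemidef)
    (hmeas : P₀ + P₁ = 1) :
    (((P₀ - P₁)ᴴ * tensorId (⇑Ξ) ρ).trace).re ≤ 1 := by
  obtain ⟨hρ, hρtr⟩ := hρ
  have hσ : (tensorId Ξ ρ).trace = 1 := (trace_tensorId hΞtr ρ).trans hρtr
  have hP₁σ := Complex.le_def.mp (trace_mul_tensorId_nonneg_of_separableOp hΞpos hρ hP₁sep)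
  rw [eq_sub_of_add_eq hmeas, Matrix.conjTranspose_sub, Matrix.conjTranspose_sub,
    Matrix.conjTranspose_one, hP₁.isHermitian.eq, Matrix.sub_mul, Matrix.sub_mul,
    Matrix.one_mul, Matrix.trace_sub, Matrix.trace_sub, hσ, Complex.sub_re, Complex.sub_re]
  simp only [Complex.one_re, Complex.zero_re] at hP₁σ ⊢
  linarith [hP₁σ.1]

/-- for a positive trace-preserving map `Ξ`, separable measurements cannot
give a correctness functional exceeding `1` on `(Ξ ⊗ id)(ρ)`. -/
theorem sep_norm_of_positive_map_le_one
    {X Y Z : Type*} [Fintype X] [Fintype Y] [Fintype Z] [DecidableEq Y] [DecidableEq Z]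
    (Ξ : Matrix X X ℂ →ₗ[ℂ] Matrix Y Y ℂ)
    (hΞpos : ∀ M : Matrix X X ℂ, M.PosSemidef → (Ξ M).PosSemidef)
    (hΞtr : ∀ M : Matrix X X ℂ, (Ξ M).trace = M.trace)
    (ρ : Matrix (X × Z) (X × Z) ℂ) (hρ : IsDensity ρ)
    (P₀ P₁ : Matrix (Y × Z) (Y × Z) ℂ)
    (hP₀sep : SeparableOp P₀) (hP₁sep : SeparableOp P₁)
    (hP₀ : P₀.PosSemidef) (hP₁ : P₁.PosSemidef)
    (hmeas : P₀ + P₁ = 1) :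
    (((P₀ - P₁)ᴴ * tensorId (⇑Ξ) ρ).trace).re ≤ 1 :=
  sep_norm_of_positive_map_le_one_general Ξ hΞpos hΞtr ρ hρ P₀ P₁ hP₁sep hP₁ hmeas
end
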